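/- Let β ∈ (0, 1/2) with β ≠ 1/3, set c = cos(2πβ), let n ∈ ℕ, and let ω ∈ Ĩⁿ(β) with ω ≠ ωₙ*. Set u₀ = 1 + r_β(ω)·√(2 + 2c), v₀ = 3·cos(ωL), v₀' = (ω/sin(ωL))·(u₀ − v₀·cos(ωL)), and define φ : [0, 2L] → ℝ by φ(s) = v₀·cos(ω(L − s)) − (v₀'/(2ω))·sin(ω(L − s)) for s ∈ [0, L] and φ(s) = (1/sin(ωL))·(v₀·sin(ω(2L − s)) + u₀·sin(ω(s − L))) for s ∈ [L, 2L]. Then the set {t ∈ [0, 2L) : φ(t) = 0} has exactly 2n+1 elements. (These 2n+1 zeros are exactly the cut positions t for which λ = ω² is a Dirichlet edge-state eigenvalue of the zigzag-truncated hexagonal graph.) -/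

import Mathlib

open Real

/-- The edge length `L = 1/√3`. -/
noncomputable def L : ℝ := 1 / Real.sqrt 3

/-- The Dirac frequency `ωₙ* = (2n+1)π/(2L)`. -/
noncomputable def ωstar (n : ℕ) : ℝ := (2 * n + 1) * π / (2 * L)

/-- `g_β(ω) = (9·cos²(ωL) − 3 − 2·cos(2πβ)) / √(2 + 2·cos(2πβ))`. -/
noncomputable def g (β ω : ℝ) : ℝ :=
  (9 * Real.cos (ω * L) ^ 2 - 3 - 2 * Real.cos (2 * π * β)) /
    Real.sqrt (2 + 2 * Real.cos (2 * π * β))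

/-- `a(β) = arccos(√(3 + 2·cos(2πβ) − 2·√(2 + 2·cos(2πβ)))/3)`. -/
noncomputable def aβ (β : ℝ) : ℝ :=
  Real.arccos (Real.sqrt (3 + 2 * Real.cos (2 * π * β) -
    2 * Real.sqrt (2 + 2 * Real.cos (2 * π * β))) / 3)

/-- The open interval `Ĩⁿ(β) = (nπ/L + a(β)/L, (n+1)π/L − a(β)/L)`. -/
noncomputable def Itilde (β : ℝ) (n : ℕ) : Set ℝ :=
  Set.Ioo (n * π / L + aβ β / L) ((n + 1) * π / L - aβ β / L)

/-- `r_β(ω) = (g_β(ω) + √(g_β(ω)² − 4))/2`. -/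
noncomputable def r (β ω : ℝ) : ℝ := (g β ω + Real.sqrt (g β ω ^ 2 - 4)) / 2

/-- `u₀ = 1 + r_β(ω)·√(2 + 2·cos(2πβ))`. -/
noncomputable def u₀ (β ω : ℝ) : ℝ :=
  1 + r β ω * Real.sqrt (2 + 2 * Real.cos (2 * π * β))

/-- `v₀ = 3·cos(ωL)`. -/
noncomputable def v₀ (ω : ℝ) : ℝ := 3 * Real.cos (ω * L)

/-- `v₀' = (ω/sin(ωL))·(u₀ − v₀·cos(ωL))`. -/
noncomputable def v₀' (β ω : ℝ) : ℝ :=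
  (ω / Real.sin (ω * L)) * (u₀ β ω - v₀ ω * Real.cos (ω * L))

/-- The characteristic function `φ`:
`φ(s) = v₀·cos(ω(L − s)) − (v₀'/(2ω))·sin(ω(L − s))` on `[0, L]` and
`φ(s) = (1/sin(ωL))·(v₀·sin(ω(2L − s)) + u₀·sin(ω(s − L)))` on `[L, 2L]`. -/
noncomputable def φ (β ω : ℝ) (s : ℝ) : ℝ :=
  if s ≤ L then
    v₀ ω * Real.cos (ω * (L - s)) - (v₀' β ω / (2 * ω)) * Real.sin (ω * (L - s))
  else
    (1 / Real.sin (ω * L)) *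
      (v₀ ω * Real.sin (ω * (2 * L - s)) + u₀ β ω * Real.sin (ω * (s - L)))

/-!
On `[0, L]` and on `[L, 2L]` the function `φ` is a sinusoid `A cos (ω (s - L)) + B sin (ω (s - L))`,
and `ω ∈ Ĩⁿ(β)` puts `ωL` in `(nπ, (n+1)π)`. A sinusoid of frequency `ω` on an interval of length
`ℓ` with `ωℓ ∈ (nπ, (n+1)π)` and nonzero endpoint values has `n` or `n + 1` zeros, with parity
fixed by the sign of the product of its endpoint values. The two pieces share the value
`φ(L) = 3 cos(ωL)`, nonzero because `ω ≠ ωₙ*`, so their counts have opposite parity, and add up to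
`2n + 1`, exactly when `φ(0) φ(2L) = u₀ (9 cos²(ωL) - u₀) / 2 < 0`. With `q = √(2 + 2c)`, membership
in `Ĩⁿ(β)` means `|cos(ωL)| < cos a(β) = |q - 1| / 3`, which forces `g_β(ω) < -2`; then `r < 0`
solves `r² - g r + 1 = 0`, and this gives `u₀ (r + q) = 9 r cos²(ωL) < 0` and
`(9 cos²(ωL) - u₀)(r + q) = 9 q cos²(ωL) > 0`.
-/

open Set

lemma exists_sin_add_eq (A B : ℝ) : ∃ R δ : ℝ, ∀ x, A * cos x + B * sin x = R * sin (x + δ) := by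
  refine ⟨‖(⟨B, A⟩ : ℂ)‖, Complex.arg ⟨B, A⟩, fun x => ?_⟩
  have hcos := Complex.norm_mul_cos_arg ⟨B, A⟩
  have hsin := Complex.norm_mul_sin_arg ⟨B, A⟩
  rw [sin_add]
  linear_combination (-sin x) * hcos - cos x * hsin

lemma neg_one_zpow_sub (m k : ℤ) : (-1 : ℝ) ^ (m - k) = (-1) ^ m * (-1) ^ k := by
  rw [← zpow_add₀ (by norm_num), show m + k = m - k + 2 * k by ring, zpow_add₀ (by norm_num),
    zpow_mul]
  norm_num

lemma neg_one_zpow_floor_mul_sin_pos {x : ℝ} (hx : sin x ≠ 0) :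
    0 < (-1) ^ ⌊x / π⌋ * sin x := by
  have hlo : ⌊x / π⌋ * π ≤ x := (le_div_iff₀ pi_pos).1 (Int.floor_le _)
  have hhi : x < ⌊x / π⌋ * π + π := by
    have := (div_lt_iff₀ pi_pos).1 (Int.lt_floor_add_one (x / π)); linarith
  rw [← sin_sub_int_mul_pi]
  refine (sin_nonneg_of_nonneg_of_le_pi (by linarith) (by linarith)).lt_of_ne' ?_
  rw [sin_sub_int_mul_pi]
  exact mul_ne_zero (zpow_ne_zero _ (by norm_num)) hx

lemma floor_sub_floor_eq_or {α : Type*} [Field α] [LinearOrder α] [IsStrictOrderedRing α]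
    [FloorRing α] {x y : α} {n : ℤ} (h1 : n < y - x) (h2 : y - x < n + 1) :
    ⌊y⌋ - ⌊x⌋ = n ∨ ⌊y⌋ - ⌊x⌋ = n + 1 := by
  have hx := Int.floor_le x
  have hy := Int.floor_le y
  have hx' := Int.lt_floor_add_one x
  have hy' := Int.lt_floor_add_one y
  have hlo : ((n - 1 : ℤ) : α) < (⌊y⌋ - ⌊x⌋ : ℤ) := by push_cast; linarith
  have hhi : ((⌊y⌋ - ⌊x⌋ : ℤ) : α) < (n + 2 : ℤ) := by push_cast; linarith
  have := Int.cast_lt.1 hlo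
  have := Int.cast_lt.1 hhi
  omega

lemma sin_zeros_Ioc_eq_image (u v : ℝ) :
    {x ∈ Ioc u v | sin x = 0} = (fun k : ℤ => k * π) '' (Finset.Ioc ⌊u / π⌋ ⌊v / π⌋ : Set ℤ) := by
  ext x
  simp only [mem_ofPred_eq, mem_Ioc, sin_eq_zero_iff, Finset.coe_Ioc, mem_image, Int.floor_lt,
    Int.le_floor, div_lt_iff₀ pi_pos, le_div_iff₀ pi_pos]
  constructor
  · rintro ⟨⟨hu, hv⟩, k, rfl⟩
    exact ⟨k, ⟨hu, hv⟩, rfl⟩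
  · rintro ⟨k, ⟨hu, hv⟩, rfl⟩
    exact ⟨⟨hu, hv⟩, k, rfl⟩

lemma sin_zeros_Ioc {u v : ℝ} {n N : ℕ} (hlo : n * π < v - u) (hhi : v - u < (n + 1) * π)
    (hu : sin u ≠ 0) (hv : sin v ≠ 0) (hN : {x ∈ Ioc u v | sin x = 0}.ncard = N) :
    {x ∈ Ioc u v | sin x = 0}.Finite ∧ (N = n ∨ N = n + 1) ∧ 0 < (-1) ^ N * (sin u * sin v) := by
  have hmono : ⌊u / π⌋ ≤ ⌊v / π⌋ :=
    Int.floor_mono (div_le_div_of_nonneg_right (by nlinarith [pi_pos]) pi_pos.le)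
  have hNint : (N : ℤ) = ⌊v / π⌋ - ⌊u / π⌋ := by
    rw [← hN, sin_zeros_Ioc_eq_image,
      ncard_image_of_injective _ fun k l h => by simpa [pi_ne_zero] using h,
      ncard_coe_finset, Int.card_Ioc, Int.toNat_of_nonneg (by omega)]
  refine ⟨?_, ?_, ?_⟩
  · rw [sin_zeros_Ioc_eq_image]
    exact (Finset.finite_toSet _).image _
  · have := floor_sub_floor_eq_or (x := u / π) (y := v / π) (n := n)
      (by rw [← sub_div, lt_div_iff₀ pi_pos]; exact_mod_cast hlo)
      (by rw [← sub_div, div_lt_iff₀ pi_pos]; exact_mod_cast hhi)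
    omega
  · rw [← zpow_natCast, hNint, neg_one_zpow_sub]
    exact (mul_pos (neg_one_zpow_floor_mul_sin_pos hu) (neg_one_zpow_floor_mul_sin_pos hv)).trans_eq
      (by ring)

lemma sinusoid_zeros_Ioc {f : ℝ → ℝ} {A B ω s₀ a b : ℝ} {n N : ℕ} (hω : 0 < ω)
    (hf : ∀ s ∈ Icc a b, f s = A * cos (ω * (s - s₀)) + B * sin (ω * (s - s₀)))
    (hlo : n * π < ω * (b - a)) (hhi : ω * (b - a) < (n + 1) * π)
    (ha : f a ≠ 0) (hb : f b ≠ 0) (hN : {s ∈ Ioc a b | f s = 0}.ncard = N) :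
    {s ∈ Ioc a b | f s = 0}.Finite ∧ (N = n ∨ N = n + 1) ∧ 0 < (-1) ^ N * (f a * f b) := by
  obtain ⟨R, δ, hRδ⟩ := exists_sin_add_eq A B
  set e : ℝ → ℝ := fun s => ω * (s - s₀) + δ
  have hfe : ∀ s ∈ Icc a b, f s = R * sin (e s) := fun s hs => (hf s hs).trans (hRδ _)
  have hab : a ≤ b := by
    by_contra! h
    nlinarith [pi_pos, (Nat.cast_nonneg n : (0 : ℝ) ≤ n)]
  have hfa := hfe a ⟨le_rfl, hab⟩
  have hfb := hfe b ⟨hab, le_rfl⟩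
  have hR : R ≠ 0 := by
    rintro rfl
    simp [hfa] at ha
  have he : StrictMono e := fun s t h => by
    simp only [e]
    nlinarith
  have he_range : range e = univ := by
    refine eq_univ_of_forall fun x => ⟨(x - δ) / ω + s₀, ?_⟩
    simp only [e]
    field_simp
    ring
  have hZ : {s ∈ Ioc a b | f s = 0} = e ⁻¹' {x ∈ Ioc (e a) (e b) | sin x = 0} := by
    ext s
    simp only [mem_ofPred_eq, mem_preimage, mem_Ioc, he.lt_iff_lt, he.le_iff_le]
    refine and_congr_right fun hs => ?_
    rw [hfe s (Ioc_subset_Icc_self hs), mul_eq_zero, or_iff_right hR]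
  have hgap : e b - e a = ω * (b - a) := by
    simp only [e]
    ring
  obtain ⟨hfin, hcount, hsign⟩ := sin_zeros_Ioc (N := N) (hgap ▸ hlo) (hgap ▸ hhi)
    (fun h => ha (by rw [hfa, h, mul_zero])) (fun h => hb (by rw [hfb, h, mul_zero]))
    (by rw [← hN, hZ, ncard_preimage_of_injective_subset_range he.injective (by simp [he_range])])
  refine ⟨hZ ▸ hfin.preimage he.injective.injOn, hcount, ?_⟩
  rw [hfa, hfb]
  exact (mul_pos (sq_pos_of_ne_zero hR) hsign).trans_eq (by ring)

lemma sin_ne_zero_of_mem_Ioo {x : ℝ} (n : ℤ) (h1 : n * π < x) (h2 : x < (n + 1) * π) :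
    sin x ≠ 0 := by
  rw [Ne, sin_eq_zero_iff]
  rintro ⟨k, rfl⟩
  have : n < k := by exact_mod_cast lt_of_mul_lt_mul_right h1 pi_pos.le
  have : k < n + 1 := by exact_mod_cast lt_of_mul_lt_mul_right h2 pi_pos.le
  omega

lemma cos_ne_zero_of_mem_Ioo {x : ℝ} (n : ℤ) (h1 : n * π < x) (h2 : x < (n + 1) * π)
    (hx : x ≠ (2 * n + 1) * π / 2) : cos x ≠ 0 := by
  rw [Ne, cos_eq_zero_iff]
  rintro ⟨k, rfl⟩
  have : 2 * n < 2 * k + 1 := by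
    have : ((2 * n : ℤ) : ℝ) * π < (2 * k + 1 : ℤ) * π := by push_cast; linarith
    exact_mod_cast lt_of_mul_lt_mul_right this pi_pos.le
  have : 2 * k + 1 < 2 * (n + 1) := by
    have : ((2 * k + 1 : ℤ) : ℝ) * π < (2 * (n + 1) : ℤ) * π := by push_cast; linarith
    exact_mod_cast lt_of_mul_lt_mul_right this pi_pos.le
  obtain rfl : k = n := by omega
  exact hx rfl

lemma abs_cos_lt_cos {a x : ℝ} (n : ℤ) (ha : 0 ≤ a) (h1 : n * π + a < x)
    (h2 : x < (n + 1) * π - a) : |cos x| < cos a := by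
  have hmem : ∀ y, 0 ≤ y → y ≤ π → y ∈ Icc 0 π := fun y h h' => ⟨h, h'⟩
  have hρ : |cos x| = |cos (x - n * π)| := by
    rw [cos_sub_int_mul_pi, abs_mul, abs_neg_one_zpow, one_mul]
  rw [hρ, abs_lt]
  constructor
  · rw [neg_lt, ← cos_pi_sub]
    exact strictAntiOn_cos (hmem _ ha (by linarith)) (hmem _ (by linarith) (by linarith))
      (by linarith)
  · exact strictAntiOn_cos (hmem _ ha (by linarith)) (hmem _ (by linarith) (by linarith))
      (by linarith)

lemma sqrt_two_add_two_cos_two_mul (x : ℝ) : √(2 + 2 * cos (2 * x)) = 2 * |cos x| := by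
  rw [cos_two_mul, show 2 + 2 * (2 * cos x ^ 2 - 1) = (2 * cos x) ^ 2 by ring, sqrt_sq_eq_abs,
    abs_mul, abs_two]

lemma add_eq_two_mul_add_one_of_neg_one_pow_neg {N₁ N₂ n : ℕ} (h₁ : N₁ = n ∨ N₁ = n + 1)
    (h₂ : N₂ = n ∨ N₂ = n + 1) (h : (-1 : ℝ) ^ (N₁ + N₂) < 0) : N₁ + N₂ = 2 * n + 1 := by
  obtain ⟨k, hk⟩ : Odd (N₁ + N₂) := by
    refine Nat.not_even_iff_odd.1 fun heven => ?_
    rw [heven.neg_one_pow] at h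
    exact one_pos.not_gt h
  omega

lemma setOf_mem_Ico_eq_union {f : ℝ → ℝ} {a b c : ℝ} (hab : a ≤ b) (hbc : b ≤ c)
    (ha : f a ≠ 0) (hc : f c ≠ 0) :
    {t ∈ Ico a c | f t = 0} = {t ∈ Ioc a b | f t = 0} ∪ {t ∈ Ioc b c | f t = 0} := by
  rw [← sep_union]
  ext t
  rw [mem_ofPred_eq, mem_ofPred_eq, ← mem_union, Ioc_union_Ioc_eq_Ioc hab hbc, mem_Ico, mem_Ioc]
  constructor
  · rintro ⟨⟨hat, htc⟩, hft⟩
    exact ⟨⟨hat.lt_of_ne (by rintro rfl; exact ha hft), htc.le⟩, hft⟩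
  · rintro ⟨⟨hat, htc⟩, hft⟩
    exact ⟨⟨hat.le, htc.lt_of_ne (by rintro rfl; exact hc hft)⟩, hft⟩

lemma L_pos : 0 < L := by
  unfold L
  positivity

lemma sqrt_two_add_two_cos_pos {β : ℝ} (hβ0 : 0 < β) (hβ1 : β < 1 / 2) :
    0 < √(2 + 2 * cos (2 * π * β)) := by
  rw [mul_assoc, sqrt_two_add_two_cos_two_mul]
  have : 0 < cos (π * β) := cos_pos_of_mem_Ioo ⟨by nlinarith [pi_pos], by nlinarith [pi_pos]⟩
  positivity

lemma cos_aβ (β : ℝ) : cos (aβ β) = |√(2 + 2 * cos (2 * π * β)) - 1| / 3 := by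
  have hq : √(2 + 2 * cos (2 * π * β)) = 2 * |cos (π * β)| := by
    rw [mul_assoc, sqrt_two_add_two_cos_two_mul]
  have hc : cos (2 * π * β) = 2 * |cos (π * β)| ^ 2 - 1 := by
    rw [sq_abs, mul_assoc, cos_two_mul]
  have hsq : 3 + 2 * cos (2 * π * β) - 2 * √(2 + 2 * cos (2 * π * β)) =
      (√(2 + 2 * cos (2 * π * β)) - 1) ^ 2 := by
    rw [hq, hc]
    ring
  rw [aβ, hsq, sqrt_sq_eq_abs, hq]
  have := abs_cos_le_one (π * β)
  have := abs_nonneg (cos (π * β))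
  exact cos_arccos (by linarith [abs_nonneg (2 * |cos (π * β)| - 1)])
    (by rw [div_le_one three_pos, abs_le]; constructor <;> linarith)

section

variable {β ω : ℝ}

lemma r_neg (hg : g β ω < -2) : r β ω < 0 := by
  have h := sq_sqrt (show 0 ≤ g β ω ^ 2 - 4 by nlinarith)
  have := sqrt_nonneg (g β ω ^ 2 - 4)
  rw [r]
  nlinarith

lemma r_sq_sub_g_mul_r (hg : 4 ≤ g β ω ^ 2) : r β ω ^ 2 - g β ω * r β ω + 1 = 0 := by
  have h := sq_sqrt (show 0 ≤ g β ω ^ 2 - 4 by linarith)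
  rw [r]
  linear_combination h / 4

lemma g_mul_sqrt (hq : √(2 + 2 * cos (2 * π * β)) ≠ 0) :
    g β ω * √(2 + 2 * cos (2 * π * β)) =
      9 * cos (ω * L) ^ 2 - √(2 + 2 * cos (2 * π * β)) ^ 2 - 1 := by
  rw [g, div_mul_cancel₀ _ hq, sq_sqrt (by nlinarith [neg_one_le_cos (2 * π * β)])]
  ring

lemma g_lt_neg_two (hq : 0 < √(2 + 2 * cos (2 * π * β)))
    (h9 : 9 * cos (ω * L) ^ 2 < (√(2 + 2 * cos (2 * π * β)) - 1) ^ 2) : g β ω < -2 := by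
  have := g_mul_sqrt (ω := ω) hq.ne'
  nlinarith

lemma u₀_mul_nine_cos_sq_sub_neg (hq : 0 < √(2 + 2 * cos (2 * π * β))) (hC : cos (ω * L) ≠ 0)
    (h9 : 9 * cos (ω * L) ^ 2 < (√(2 + 2 * cos (2 * π * β)) - 1) ^ 2) :
    u₀ β ω * (9 * cos (ω * L) ^ 2 - u₀ β ω) < 0 := by
  set q := √(2 + 2 * cos (2 * π * β))
  have hg := g_lt_neg_two hq h9
  have hgq := g_mul_sqrt (ω := ω) hq.ne'
  have hr := r_neg hg
  have hr2 := r_sq_sub_g_mul_r (by nlinarith : 4 ≤ g β ω ^ 2)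
  have hC2 : 0 < cos (ω * L) ^ 2 := by positivity
  have hu : u₀ β ω = 1 + r β ω * q := rfl
  have h1 : u₀ β ω * (r β ω + q) = 9 * r β ω * cos (ω * L) ^ 2 := by
    rw [hu]
    linear_combination q * hr2 + r β ω * hgq
  have h2 : (9 * cos (ω * L) ^ 2 - u₀ β ω) * (r β ω + q) = 9 * q * cos (ω * L) ^ 2 := by
    linear_combination -h1
  have h3 : u₀ β ω * (9 * cos (ω * L) ^ 2 - u₀ β ω) * (r β ω + q) ^ 2 < 0 := by
    have : u₀ β ω * (r β ω + q) * ((9 * cos (ω * L) ^ 2 - u₀ β ω) * (r β ω + q)) < 0 := by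
      rw [h1, h2]
      have : 0 < q * cos (ω * L) ^ 2 := mul_pos hq hC2
      nlinarith [mul_pos (neg_pos.2 hr) this]
    linarith
  exact neg_of_mul_neg_left h3 (sq_nonneg _)

lemma φ_eq_of_le {s : ℝ} (hs : s ≤ L) :
    φ β ω s = v₀ ω * cos (ω * (s - L)) + v₀' β ω / (2 * ω) * sin (ω * (s - L)) := by
  rw [φ, if_pos hs, ← neg_sub L s, mul_neg, cos_neg, sin_neg]
  ring

lemma φ_eq_of_ge (hω : ω ≠ 0) (hS : sin (ω * L) ≠ 0) {s : ℝ} (hs : L ≤ s) :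
    φ β ω s = v₀ ω * cos (ω * (s - L)) + v₀' β ω / ω * sin (ω * (s - L)) := by
  rcases hs.eq_or_lt with rfl | hs
  · simp [φ]
  rw [φ, if_neg hs.not_ge, v₀', show ω * (2 * L - s) = ω * L - ω * (s - L) by ring, sin_sub]
  field_simp
  ring

lemma φ_zero (hω : ω ≠ 0) (hS : sin (ω * L) ≠ 0) :
    φ β ω 0 = (9 * cos (ω * L) ^ 2 - u₀ β ω) / 2 := by
  rw [φ, if_pos L_pos.le, v₀', v₀, sub_zero]
  field_simp
  ring

lemma φ_L : φ β ω L = v₀ ω := by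
  simp [φ]

lemma φ_two_mul_L (hS : sin (ω * L) ≠ 0) : φ β ω (2 * L) = u₀ β ω := by
  rw [φ, if_neg (by linarith [L_pos]), show 2 * L - 2 * L = 0 by ring,
    show 2 * L - L = L by ring]
  field_simp
  simp

lemma ncard_zeros_φ {n : ℕ} (hω : 0 < ω) (h1 : n * π < ω * L) (h2 : ω * L < (n + 1) * π)
    (hC : cos (ω * L) ≠ 0) (hsign : u₀ β ω * (9 * cos (ω * L) ^ 2 - u₀ β ω) < 0) :
    {t ∈ Ico (0 : ℝ) (2 * L) | φ β ω t = 0}.ncard = 2 * n + 1 := by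
  have hL := L_pos
  have hS : sin (ω * L) ≠ 0 :=
    sin_ne_zero_of_mem_Ioo n (by exact_mod_cast h1) (by exact_mod_cast h2)
  have hφ0 := φ_zero (β := β) hω.ne' hS
  have hφ2L := φ_two_mul_L (β := β) hS
  have hφL : φ β ω L ≠ 0 := by
    rw [φ_L, v₀]
    exact mul_ne_zero three_ne_zero hC
  have hends : φ β ω 0 * φ β ω (2 * L) < 0 := by
    rw [hφ0, hφ2L]
    linarith
  have hφ0' : φ β ω 0 ≠ 0 := left_ne_zero_of_mul hends.ne
  have hφ2L' : φ β ω (2 * L) ≠ 0 := right_ne_zero_of_mul hends.ne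
  obtain ⟨hfin₁, hN₁, hsign₁⟩ := sinusoid_zeros_Ioc hω (fun s hs => φ_eq_of_le hs.2)
    (by rwa [sub_zero]) (by rwa [sub_zero]) hφ0' hφL rfl
  obtain ⟨hfin₂, hN₂, hsign₂⟩ := sinusoid_zeros_Ioc hω (fun s hs => φ_eq_of_ge hω.ne' hS hs.1)
    (by rwa [two_mul, add_sub_cancel_right]) (by rwa [two_mul, add_sub_cancel_right]) hφL hφ2L' rfl
  rw [setOf_mem_Ico_eq_union hL.le (by linarith) hφ0' hφ2L',
    ncard_union_eq ((Ioc_disjoint_Ioc_of_le le_rfl).mono (sep_subset _ _) (sep_subset _ _))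
      hfin₁ hfin₂]
  refine add_eq_two_mul_add_one_of_neg_one_pow_neg hN₁ hN₂ ?_
  have hφL2 : 0 < φ β ω L ^ 2 := by positivity
  refine neg_of_mul_pos_left ?_ (mul_neg_of_pos_of_neg hφL2 hends).le
  exact (mul_pos hsign₁ hsign₂).trans_eq (by ring)

end

theorem stmt_18_general (β : ℝ) (hβ0 : 0 < β) (hβ1 : β < 1 / 2) (n : ℕ)
    (ω : ℝ) (hω : ω ∈ Itilde β n) (hωne : ω ≠ ωstar n) :
    {t ∈ Set.Ico (0 : ℝ) (2 * L) | φ β ω t = 0}.ncard = 2 * n + 1 := by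
  have hL := L_pos
  have ha : 0 ≤ aβ β := arccos_nonneg _
  obtain ⟨hω₁, hω₂⟩ := hω
  rw [← add_div, div_lt_iff₀ hL] at hω₁
  rw [← sub_div, lt_div_iff₀ hL] at hω₂
  have hC9 : 9 * cos (ω * L) ^ 2 < (√(2 + 2 * cos (2 * π * β)) - 1) ^ 2 := by
    have h := abs_cos_lt_cos n ha (by exact_mod_cast hω₁) (by exact_mod_cast hω₂)
    rw [cos_aβ] at h
    nlinarith [abs_nonneg (cos (ω * L)), sq_abs (cos (ω * L)),
      sq_abs (√(2 + 2 * cos (2 * π * β)) - 1)]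
  have hC : cos (ω * L) ≠ 0 := by
    refine cos_ne_zero_of_mem_Ioo n (by push_cast; linarith) (by push_cast; linarith) fun h => ?_
    refine hωne ?_
    rw [ωstar, eq_div_iff (by positivity)]
    push_cast at h
    linarith
  have hω0 : 0 < ω := by
    refine lt_of_mul_lt_mul_right ?_ hL.le
    rw [zero_mul]
    linarith [(by positivity : (0 : ℝ) ≤ n * π)]
  exact ncard_zeros_φ hω0 (by linarith) (by linarith) hC
    (u₀_mul_nine_cos_sq_sub_neg (sqrt_two_add_two_cos_pos hβ0 hβ1) hC hC9)

theorem stmt_18 (β : ℝ) (hβ0 : 0 < β) (hβ1 : β < 1 / 2) (hβ3 : β ≠ 1 / 3) (n : ℕ)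
    (ω : ℝ) (hω : ω ∈ Itilde β n) (hωne : ω ≠ ωstar n) :
    {t ∈ Set.Ico (0 : ℝ) (2 * L) | φ β ω t = 0}.ncard = 2 * n + 1 :=
  stmt_18_general β hβ0 hβ1 n ω hω hωne
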